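/- arXiv:2210.14894 — 4 statements merged into one kernel-verified Lean document; each statement's English description precedes it below -/
import Mathlib

section
/- For any real polynomial p(t) = ∑_{κ=1}^k a_κ t^κ with zero constant term, every coefficient satisfies |a_κ| ≤ (1+√2)^k · sup_{|t| ≤ 1} |p(t)|. -/
/-!
Expand `p = ∑ cⱼ Tⱼ` in Chebyshev polynomials. Orthogonality of the `Tⱼ` for the weight
`1/√(1 - x²)`, together with `|Tⱼ| ≤ 1` on `[-1, 1]`, gives `|cⱼ| ≤ 2 sup |p|` for `j ≥ 1`.
The coefficients of `Tⱼ` are dominated by those of `Sⱼ = i⁻ʲ Tⱼ(iX)`, which satisfy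
`S_{j+2} = 2X S_{j+1} + Sⱼ`. Telescoping this recurrence expresses `2 ∑_{j=1}^k [X^κ] Sⱼ` through
the coefficients of `S_{k+1} + S_k`, and these are at most `(1 + √2)^k` because
`(1 + √2)² = 2 (1 + √2) + 1`.
-/

open Polynomial Polynomial.Chebyshev Real MeasureTheory

theorem exists_eq_sum_smul_T {K : Type*} [Field K] [NeZero (2 : K)] {k : ℕ} {p : K[X]}
    (hp : p.natDegree ≤ k) : ∃ c : ℕ → K, ∑ j ∈ Finset.range (k + 1), c j • T K j = p := by
  let S : Sequence K := ⟨fun j => T K j, fun j => by simp [degree_T]⟩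
  have hspan := S.span_degreeLT (m := k + 1) fun j _ => by simp [S, leadingCoeff_T, two_ne_zero]
  rw [← Submodule.mem_span_image_finset_iff_exists_fun', Finset.coe_range]
  change p ∈ Submodule.span K (S '' _)
  rw [hspan, mem_degreeLT]
  exact (degree_le_of_natDegree_le hp).trans_lt (by exact_mod_cast Nat.lt_succ_self k)

theorem integral_eval_sum_smul_T_mul_T_measureT (s : Finset ℕ) (c : ℕ → ℝ) {i : ℕ}
    (hi : i ∈ s) (hi0 : i ≠ 0) :
    ∫ x, (∑ j ∈ s, c j • T ℝ j).eval x * (T ℝ i).eval x ∂measureT = c i * (π / 2) := by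
  simp only [eval_finsetSum, eval_smul, smul_eq_mul, Finset.sum_mul, mul_assoc]
  rw [integral_finsetSum _ fun j _ => (integrable_measureT (by fun_prop)).const_mul _,
    Finset.sum_eq_single_of_mem i hi fun j _ hji => by
      rw [integral_const_mul, integral_eval_T_real_mul_eval_T_real_measureT_of_ne hji, mul_zero],
    integral_const_mul, integral_T_real_mul_self_measureT_of_ne_zero hi0]

theorem abs_integral_eval_mul_T_measureT_le {p : ℝ[X]} {M : ℝ}
    (hM : ∀ t ∈ Set.Icc (-1 : ℝ) 1, |p.eval t| ≤ M) (n : ℤ) :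
    |∫ x, p.eval x * (T ℝ n).eval x ∂measureT| ≤ π * M := by
  rw [integral_measureT_eq_integral_cos]
  have h := intervalIntegral.norm_integral_le_of_norm_le_const (a := 0) (b := π) (C := M)
    (f := fun θ => p.eval (cos θ) * (T ℝ n).eval (cos θ)) fun θ _ => by
      rw [T_real_cos, norm_mul, Real.norm_eq_abs, Real.norm_eq_abs]
      exact (mul_le_of_le_one_right (abs_nonneg _) (abs_cos_le_one _)).trans
        (hM _ ⟨neg_one_le_cos θ, cos_le_one θ⟩)
  rwa [Real.norm_eq_abs, sub_zero, abs_of_pos pi_pos, mul_comm] at h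

theorem abs_le_two_mul_of_forall_abs_eval_sum_smul_T_le {s : Finset ℕ} {c : ℕ → ℝ} {M : ℝ}
    (hM : ∀ t ∈ Set.Icc (-1 : ℝ) 1, |(∑ j ∈ s, c j • T ℝ j).eval t| ≤ M) {i : ℕ}
    (hi : i ∈ s) (hi0 : i ≠ 0) : |c i| ≤ 2 * M := by
  have h := abs_integral_eval_mul_T_measureT_le hM i
  rw [integral_eval_sum_smul_T_mul_T_measureT s c hi hi0, abs_mul,
    abs_of_pos (by positivity : 0 < π / 2)] at h
  nlinarith [pi_pos]

/-- `absChebyshev n = i⁻ⁿ Tₙ(iX)`; its coefficients are the absolute values of those of `Tₙ`. -/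
noncomputable def absChebyshev : ℕ → ℝ[X]
  | 0 => 1
  | 1 => X
  | n + 2 => 2 * X * absChebyshev (n + 1) + absChebyshev n

theorem coeff_two_mul_X_mul_zero {R : Type*} [Semiring R] (q : R[X]) : (2 * X * q).coeff 0 = 0 := by
  simp [mul_assoc]

theorem coeff_two_mul_X_mul_succ {R : Type*} [Semiring R] (q : R[X]) (m : ℕ) :
    (2 * X * q).coeff (m + 1) = 2 * q.coeff m := by
  simp [mul_assoc]

theorem abs_coeff_T_le_coeff_absChebyshev (n m : ℕ) :
    |(T ℝ n).coeff m| ≤ (absChebyshev n).coeff m := by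
  induction n using Nat.twoStepInduction generalizing m with
  | zero => rcases m with _ | m <;> simp [absChebyshev, coeff_one]
  | one => rcases m with _ | _ | m <;> simp [absChebyshev, coeff_X]
  | more n ih₀ ih₁ =>
    have hT : T ℝ ↑(n + 2) = 2 * X * T ℝ ↑(n + 1) - T ℝ n := by push_cast; exact T_add_two ℝ n
    rw [hT, absChebyshev, coeff_sub, coeff_add]
    rcases m with _ | m
    · simpa [coeff_two_mul_X_mul_zero] using ih₀ 0
    · rw [coeff_two_mul_X_mul_succ, coeff_two_mul_X_mul_succ]
      calc |2 * (T ℝ ↑(n + 1)).coeff m - (T ℝ n).coeff (m + 1)|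
          ≤ 2 * |(T ℝ ↑(n + 1)).coeff m| + |(T ℝ n).coeff (m + 1)| := by
            simpa [abs_mul] using abs_sub (2 * (T ℝ ↑(n + 1)).coeff m) ((T ℝ n).coeff (m + 1))
        _ ≤ _ := by linarith [ih₁ m, ih₀ (m + 1)]

theorem one_add_sqrt_two_pow_add_two (n : ℕ) :
    (1 + √2) ^ (n + 2) = 2 * (1 + √2) ^ (n + 1) + (1 + √2) ^ n := by
  have h : √2 ^ 2 = 2 := sq_sqrt (by norm_num)
  linear_combination (1 + √2) ^ n * h

theorem coeff_absChebyshev_add_le (n m : ℕ) :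
    (absChebyshev (n + 1) + absChebyshev n).coeff m ≤ (1 + √2) ^ n := by
  induction n using Nat.twoStepInduction generalizing m with
  | zero => rcases m with _ | _ | m <;> simp [absChebyshev, coeff_X, coeff_one]
  | one =>
    have h : (1 : ℝ) ≤ √2 := by rw [le_sqrt] <;> norm_num
    rcases m with _ | _ | _ | m <;> simp [absChebyshev, coeff_X, coeff_one] <;> linarith
  | more n ih₀ ih₁ =>
    have hrec : absChebyshev (n + 2 + 1) + absChebyshev (n + 2) =
        2 * X * (absChebyshev (n + 1 + 1) + absChebyshev (n + 1)) +
          (absChebyshev (n + 1) + absChebyshev n) := by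
      simp only [absChebyshev]; ring
    rw [hrec, coeff_add, one_add_sqrt_two_pow_add_two]
    rcases m with _ | m
    · rw [coeff_two_mul_X_mul_zero, zero_add]
      exact (ih₀ 0).trans (le_add_of_nonneg_left (by positivity))
    · rw [coeff_two_mul_X_mul_succ]
      linarith [ih₁ m, ih₀ (m + 1)]

theorem two_mul_X_mul_sum_absChebyshev (k : ℕ) :
    2 * X * ∑ j ∈ Finset.range k, absChebyshev (j + 1) =
      absChebyshev (k + 1) + absChebyshev k - (X + 1) := by
  induction k with
  | zero => simp [absChebyshev]
  | succ k ih =>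
    rw [Finset.sum_range_succ, mul_add, ih, absChebyshev]; ring

theorem two_mul_sum_coeff_absChebyshev_le (k m : ℕ) :
    2 * ∑ j ∈ Finset.range k, (absChebyshev (j + 1)).coeff m ≤ (1 + √2) ^ k := by
  have h := congrArg (coeff · (m + 1)) (two_mul_X_mul_sum_absChebyshev k)
  simp only [coeff_two_mul_X_mul_succ, finsetSum_coeff, coeff_sub] at h
  have hX : 0 ≤ (X + 1 : ℝ[X]).coeff (m + 1) := by
    rcases m with _ | m <;> simp [coeff_X, coeff_one]
  linarith [coeff_absChebyshev_add_le k (m + 1)]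

theorem abs_coeff_le_of_forall_abs_eval_le {k κ : ℕ} {p : ℝ[X]} {M : ℝ}
    (hp : p.natDegree ≤ k) (hM : ∀ t ∈ Set.Icc (-1 : ℝ) 1, |p.eval t| ≤ M) (hκ : κ ≠ 0) :
    |p.coeff κ| ≤ (1 + √2) ^ k * M := by
  obtain ⟨c, rfl⟩ := exists_eq_sum_smul_T hp
  have hM₀ : 0 ≤ M := (abs_nonneg _).trans (hM 0 (by norm_num))
  have hcoeff : (∑ j ∈ Finset.range (k + 1), c j • T ℝ j).coeff κ =
      ∑ j ∈ Finset.range k, c (j + 1) * (T ℝ ↑(j + 1)).coeff κ := by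
    simp [finsetSum_coeff, Finset.sum_range_succ' _ k, coeff_one, hκ]
  calc |(∑ j ∈ Finset.range (k + 1), c j • T ℝ j).coeff κ|
      ≤ ∑ j ∈ Finset.range k, |c (j + 1)| * |(T ℝ ↑(j + 1)).coeff κ| := by
        simp only [hcoeff, ← abs_mul]
        exact Finset.abs_sum_le_sum_abs _ _
    _ ≤ ∑ j ∈ Finset.range k, 2 * M * (absChebyshev (j + 1)).coeff κ := by
        gcongr with j hj
        · exact abs_le_two_mul_of_forall_abs_eval_sum_smul_T_le hM (by simp at hj ⊢; omega) j.succ_ne_zero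
        · exact abs_coeff_T_le_coeff_absChebyshev _ _
    _ = M * (2 * ∑ j ∈ Finset.range k, (absChebyshev (j + 1)).coeff κ) := by
        rw [Finset.mul_sum, Finset.mul_sum]
        exact Finset.sum_congr rfl fun _ _ => by ring
    _ ≤ (1 + √2) ^ k * M := by
        rw [mul_comm]; gcongr; exact two_mul_sum_coeff_absChebyshev_le k κ

theorem coeff_le_sup_abs_general (k : ℕ) (p : Polynomial ℝ)
    (hdeg : p.natDegree ≤ k) :
    ∀ κ : ℕ, 1 ≤ κ → κ ≤ k →
      |p.coeff κ| ≤ (1 + Real.sqrt 2) ^ k *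
        sSup ((fun t => |p.eval t|) '' Set.Icc (-1 : ℝ) 1) := by
  intro κ hκ _
  have hbdd : BddAbove ((fun t => |p.eval t|) '' Set.Icc (-1 : ℝ) 1) :=
    (isCompact_Icc.image_of_continuousOn p.continuous.abs.continuousOn).bddAbove
  exact abs_coeff_le_of_forall_abs_eval_le hdeg (fun t ht => le_csSup hbdd ⟨t, ht, rfl⟩)
    (Nat.one_le_iff_ne_zero.mp hκ)

/-- Markov brothers' type inequality: for a real polynomial `p` of degree at most `k`
with zero constant term, every coefficient satisfies
`|p.coeff κ| ≤ (1 + √2)^k * sup_{|t| ≤ 1} |p(t)|`. -/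
theorem coeff_le_sup_abs (k : ℕ) (p : Polynomial ℝ)
    (hdeg : p.natDegree ≤ k) (h0 : p.coeff 0 = 0) :
    ∀ κ : ℕ, 1 ≤ κ → κ ≤ k →
      |p.coeff κ| ≤ (1 + Real.sqrt 2) ^ k *
        sSup ((fun t => |p.eval t|) '' Set.Icc (-1 : ℝ) 1) :=
  coeff_le_sup_abs_general k p hdeg
end

section
/- Let ε̃, η > 0, α ∈ [-η, η], β ∈ [0,1], and x = αβ. Suppose |x̂ - x| < ηε̃ and |β̂ - β| < ε̃. Define α̂ = 0 if β̂ ≤ 2ε̃ and α̂ = x̂/β̂ otherwise. Then β·|α̂ - α|² ≤ 3η²ε̃. -/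
/-- Filtering a small weight factor: with `α ∈ [-η, η]`, `β ∈ [0,1]`, `x = α β`,
estimates `|x̂ - x| < η ε̃`, `|β̂ - β| < ε̃`, and
`α̂ = 0` if `β̂ ≤ 2 ε̃`, `α̂ = x̂ / β̂` otherwise, we get `β |α̂ - α|² ≤ 3 η² ε̃`. -/
theorem filter_small_weight (ε η α β x xh βh : ℝ)
    (hε : 0 < ε) (hη : 0 < η)
    (hα₁ : -η ≤ α) (hα₂ : α ≤ η) (hβ₁ : 0 ≤ β) (hβ₂ : β ≤ 1)
    (hx : x = α * β)
    (hxh : |xh - x| < η * ε) (hβh : |βh - β| < ε) :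
    β * |(if βh ≤ 2 * ε then 0 else xh / βh) - α| ^ 2 ≤ 3 * η ^ 2 * ε := by
  have hβb := abs_lt.mp hβh
  split_ifs with h
  · have hβ3 : β < 3 * ε := by linarith
    have hα2 : α ^ 2 ≤ η ^ 2 := by nlinarith
    rw [sq_abs]
    nlinarith [sq_nonneg α, sq_nonneg η]
  · push_neg at h
    have hβhpos : 0 < βh := by linarith
    have hkey : |xh - α * βh| < 2 * η * ε := by
      have h1 : |α * (β - βh)| ≤ η * ε := by
        rw [abs_mul]
        have h2 : |β - βh| ≤ ε := by rw [abs_sub_comm]; exact le_of_lt hβh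
        have hαa : |α| ≤ η := abs_le.mpr ⟨hα₁, hα₂⟩
        exact mul_le_mul hαa h2 (abs_nonneg _) hη.le
      calc |xh - α * βh| = |(xh - x) + α * (β - βh)| := by rw [hx]; ring_nf
        _ ≤ |xh - x| + |α * (β - βh)| := abs_add_le _ _
        _ < 2 * η * ε := by linarith
    have heq : xh / βh - α = (xh - α * βh) / βh := by field_simp
    rw [heq, sq_abs, div_pow, mul_div_assoc', div_le_iff₀ (by positivity : (0:ℝ) < βh ^ 2)]
    have hsq : (xh - α * βh) ^ 2 < (2 * η * ε) ^ 2 := by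
      have h3 := abs_nonneg (xh - α * βh)
      nlinarith [sq_abs (xh - α * βh)]
    have hβub : β < βh + ε := by linarith
    have h4 : β * (xh - α * βh) ^ 2 ≤ β * (2 * η * ε) ^ 2 :=
      mul_le_mul_of_nonneg_left hsq.le hβ₁
    have h5 : 0 < (βh - 2 * ε) * (3 * βh + 2 * ε) := by nlinarith
    nlinarith [mul_pos (mul_pos hη hη) hε, mul_pos hε hε,
      mul_lt_mul_of_pos_right (show 4 * ε * β < 4 * ε * (βh + ε) by nlinarith)
        (mul_pos (mul_pos hη hη) hε)]
end

section
/- Let ε̃, η > 0, S a finite index set, and for each P ∈ S let α_P ∈ [-η,η], β_P ∈ [0,1], x_P = α_P β_P. Suppose ∑_{P∈S} |α_P|^r ≤ A^r for some A > 0 and 1 ≤ r < 2. Given estimates with |x̂_P - x_P| < ηε̃ and |β̂_P - β_P| < ε̃ for all P, define α̂_P = x̂_P/β̂_P when β̂_P > 2ε̃ and |x̂_P|/β̂_P^(1/2) > 2η√ε̃, and α̂_P = 0 otherwise. Then ∑_{P∈S} β_P |α̂_P - α_P|² ≤ 6 A^r η^(2-r) ε̃^(1-r/2), and moreover β_P |α̂_P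 - α_P|² ≤ 9η²ε̃ for every P ∈ S. -/
/-!
Write `s = η √ε` for the threshold and `t_P = |α_P| √β_P` for the influence of `P`. If `P`
passes the filter, then `β̂_P > 2ε` makes the weighted error of `x̂_P / β̂_P` at most `3 s²`,
and the second test forces `t_P ≥ s`. If `P` is discarded, its weighted error is `t_P²`, and
`t_P ≤ 3 s`: either `β_P ≤ 9ε`, or `β̂_P > 2ε` and the second test failed. In both cases the
error is at most `3 s^(2-r) t_P^r ≤ 3 η^(2-r) ε^(1-r/2) |α_P|^r`, and summing against
`∑ |α_P|^r ≤ A^r` gives the total bound.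
-/

open Real Finset

noncomputable def thresholdEstimate (ε η xh βh : ℝ) : ℝ :=
  if 2 * ε < βh ∧ 2 * η * √ε < |xh| / √βh then xh / βh else 0

section Pointwise

variable {ε η a b xh βh : ℝ}

lemma weighted_sq_error_le_of_kept (hε : 0 < ε) (haη : |a| ≤ η)
    (hxh : |xh - a * b| < η * ε) (hβh : |βh - b| < ε) (hkeep : 2 * ε < βh) :
    b * (xh / βh - a) ^ 2 ≤ 3 * η ^ 2 * ε := by
  have hη : 0 ≤ η := (abs_nonneg a).trans haη
  have hβh0 : 0 < βh := by linarith
  have hb : b < βh + ε := by linarith [(abs_lt.mp hβh).1]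
  have hscaled : |βh * (xh / βh - a)| ≤ 2 * η * ε := by
    have hsplit : βh * (xh / βh - a) = (xh - a * b) - a * (βh - b) := by
      field_simp; ring
    calc |βh * (xh / βh - a)| ≤ |xh - a * b| + |a| * |βh - b| := by
          rw [hsplit, ← abs_mul]; exact abs_sub _ _
      _ ≤ η * ε + η * ε := by gcongr
      _ = 2 * η * ε := by ring
  have hsq : (βh * (xh / βh - a)) ^ 2 ≤ 4 * η ^ 2 * ε ^ 2 := by
    nlinarith [sq_abs (βh * (xh / βh - a)), abs_nonneg (βh * (xh / βh - a))]
  have hkey : b * (xh / βh - a) ^ 2 * βh ^ 2 ≤ 3 * η ^ 2 * ε * βh ^ 2 :=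
    calc b * (xh / βh - a) ^ 2 * βh ^ 2 = b * (βh * (xh / βh - a)) ^ 2 := by ring
      _ ≤ (βh + ε) * (4 * η ^ 2 * ε ^ 2) := by gcongr
      _ ≤ 3 * η ^ 2 * ε * βh ^ 2 := by
        nlinarith [mul_nonneg (mul_nonneg (sq_nonneg η) hε.le)
          (mul_nonneg (by linarith : 0 ≤ 3 * βh + 2 * ε) (by linarith : 0 ≤ βh - 2 * ε))]
  exact le_of_mul_le_mul_right hkey (by positivity)

lemma threshold_le_influence_of_kept (hε : 0 < ε) (hη : 0 < η)
    (hxh : |xh - a * b| < η * ε) (hβh : |βh - b| < ε) (hb : 0 ≤ b)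
    (hkeep : 2 * ε < βh ∧ 2 * η * √ε < |xh| / √βh) :
    η * √ε ≤ |a| * √b := by
  obtain ⟨hβh_gt, hxh_gt⟩ := hkeep
  have hβh0 : 0 < βh := by linarith
  have hu := sqrt_pos.mpr hε
  have hw := sqrt_pos.mpr hβh0
  have hv := sqrt_nonneg b
  have hu2 := sq_sqrt hε.le
  have hv2 := sq_sqrt hb
  have hw2 := sq_sqrt hβh0.le
  have hxh_gt' : 2 * η * √ε * √βh < |xh| := (lt_div_iff₀ hw).mp hxh_gt
  have hxh_le : |xh| < |a| * √b ^ 2 + η * √ε ^ 2 := by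
    rw [hu2, hv2, ← abs_of_nonneg hb, ← abs_mul]
    linarith [abs_sub_abs_le_abs_sub xh (a * b)]
  have hu_le : 4 * √ε ≤ 3 * √βh := le_of_sq_le_sq (by nlinarith) (by positivity)
  have hv_le : √b ≤ 2 * √βh - √ε := by
    refine le_of_sq_le_sq ?_ (by linarith)
    nlinarith [(abs_lt.mp hβh).1, mul_le_mul_of_nonneg_left hu_le hw.le]
  nlinarith [mul_pos hη hu, mul_le_mul_of_nonneg_left hv_le (mul_pos hη hu).le]

lemma influence_le_of_filtered (hε : 0 < ε) (haη : |a| ≤ η)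
    (hxh : |xh - a * b| < η * ε) (hβh : |βh - b| < ε) (hb : 0 ≤ b)
    (hfilt : ¬(2 * ε < βh ∧ 2 * η * √ε < |xh| / √βh)) :
    |a| * √b ≤ 3 * (η * √ε) := by
  have hη : 0 ≤ η := (abs_nonneg a).trans haη
  have hu := sqrt_pos.mpr hε
  have hv := sqrt_nonneg b
  have hu2 := sq_sqrt hε.le
  have hv2 := sq_sqrt hb
  by_cases hb9 : b ≤ 9 * ε
  · refine le_of_sq_le_sq ?_ (by positivity)
    rw [mul_pow, mul_pow, mul_pow, hu2, hv2]
    nlinarith [pow_le_pow_left₀ (abs_nonneg a) haη 2]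
  have hβh0 : 2 * ε < βh := by linarith [(abs_lt.mp hβh).1]
  have hw := sqrt_pos.mpr (by linarith : 0 < βh)
  have hw2 := sq_sqrt (by linarith : 0 ≤ βh)
  have hxh_le : |xh| ≤ 2 * η * √ε * √βh :=
    (div_le_iff₀ hw).mp (not_lt.mp (hfilt ⟨hβh0, ·⟩))
  have hw_le : √βh ≤ √b + √ε :=
    le_of_sq_le_sq (by nlinarith [(abs_lt.mp hβh).2]) (by positivity)
  have hu_le : 3 * √ε ≤ √b := le_of_sq_le_sq (by nlinarith) hv
  have hab : |a| * √b ^ 2 < |xh| + η * √ε ^ 2 := by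
    rw [hu2, hv2, ← abs_of_nonneg hb, ← abs_mul]
    linarith [abs_sub_abs_le_abs_sub (a * b) xh, abs_sub_comm xh (a * b)]
  nlinarith [mul_le_mul_of_nonneg_left hw_le (by positivity : 0 ≤ 2 * η * √ε),
    mul_le_mul_of_nonneg_left hu_le (by positivity : 0 ≤ η * √ε)]

lemma thresholdEstimate_error_dichotomy (hε : 0 < ε) (hη : 0 < η) (haη : |a| ≤ η)
    (hb : 0 ≤ b) (hxh : |xh - a * b| < η * ε) (hβh : |βh - b| < ε) :
    (b * (thresholdEstimate ε η xh βh - a) ^ 2 ≤ 3 * (η * √ε) ^ 2 ∧ η * √ε ≤ |a| * √b) ∨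
      (b * (thresholdEstimate ε η xh βh - a) ^ 2 ≤ (|a| * √b) ^ 2 ∧
        |a| * √b ≤ 3 * (η * √ε)) := by
  unfold thresholdEstimate
  split_ifs with hkeep
  · refine .inl ⟨?_, threshold_le_influence_of_kept hε hη hxh hβh hb hkeep⟩
    rw [mul_pow, sq_sqrt hε.le, ← mul_assoc]
    exact weighted_sq_error_le_of_kept hε haη hxh hβh hkeep.1
  · refine .inr ⟨le_of_eq ?_, influence_le_of_filtered hε haη hxh hβh hb hkeep⟩
    rw [mul_pow, sq_abs, sq_sqrt hb]
    ring

end Pointwise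

lemma sq_eq_rpow_mul_rpow {x : ℝ} (hx : 0 ≤ x) (r : ℝ) : x ^ 2 = x ^ (2 - r) * x ^ r := by
  rw [← rpow_add' hx (by norm_num), sub_add_cancel, rpow_two]

lemma le_three_mul_rpow_mul_rpow {E s t r : ℝ} (hs : 0 ≤ s) (ht : 0 ≤ t) (hr1 : 1 ≤ r)
    (hr2 : r ≤ 2) (h : (E ≤ 3 * s ^ 2 ∧ s ≤ t) ∨ (E ≤ t ^ 2 ∧ t ≤ 3 * s)) :
    E ≤ 3 * s ^ (2 - r) * t ^ r := by
  rcases h with ⟨hE, hst⟩ | ⟨hE, hts⟩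
  · calc E ≤ 3 * s ^ 2 := hE
      _ = 3 * s ^ (2 - r) * s ^ r := by rw [sq_eq_rpow_mul_rpow hs r, mul_assoc]
      _ ≤ 3 * s ^ (2 - r) * t ^ r := by gcongr
  · have h3 : (3 : ℝ) ^ (2 - r) ≤ 3 := by
      simpa using
        rpow_le_rpow_of_exponent_le (by norm_num : (1 : ℝ) ≤ 3) (by linarith : 2 - r ≤ 1)
    calc E ≤ t ^ 2 := hE
      _ = t ^ (2 - r) * t ^ r := sq_eq_rpow_mul_rpow ht r
      _ ≤ (3 * s) ^ (2 - r) * t ^ r := by gcongr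
      _ = 3 ^ (2 - r) * s ^ (2 - r) * t ^ r := by rw [mul_rpow (by norm_num) hs]
      _ ≤ 3 * s ^ (2 - r) * t ^ r := by gcongr

lemma thresholdEstimate_error_le {ε η a b xh βh r : ℝ} (hε : 0 < ε) (hη : 0 < η)
    (haη : |a| ≤ η) (hb0 : 0 ≤ b) (hb1 : b ≤ 1) (hxh : |xh - a * b| < η * ε)
    (hβh : |βh - b| < ε) (hr1 : 1 ≤ r) (hr2 : r ≤ 2) :
    b * |thresholdEstimate ε η xh βh - a| ^ 2 ≤
        3 * (η ^ (2 - r) * ε ^ (1 - r / 2)) * |a| ^ r ∧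
      b * |thresholdEstimate ε η xh βh - a| ^ 2 ≤ 9 * η ^ 2 * ε := by
  rw [sq_abs]
  have hs : 0 ≤ η * √ε := by positivity
  have ht : 0 ≤ |a| * √b := by positivity
  have hd := thresholdEstimate_error_dichotomy hε hη haη hb0 hxh hβh
  constructor
  · calc _ ≤ 3 * (η * √ε) ^ (2 - r) * (|a| * √b) ^ r :=
          le_three_mul_rpow_mul_rpow hs ht hr1 hr2 hd
      _ = 3 * (η ^ (2 - r) * ε ^ (1 - r / 2)) * |a| ^ r * √b ^ r := by
        rw [mul_rpow hη.le (sqrt_nonneg ε), mul_rpow (abs_nonneg a) (sqrt_nonneg b),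
          sqrt_eq_rpow, ← rpow_mul hε.le, show 1 / 2 * (2 - r) = 1 - r / 2 by ring]
        ring
      _ ≤ 3 * (η ^ (2 - r) * ε ^ (1 - r / 2)) * |a| ^ r :=
        mul_le_of_le_one_right (by positivity)
          (rpow_le_one (sqrt_nonneg b) (sqrt_le_one.mpr hb1) (by linarith))
  · have hs2 : (η * √ε) ^ 2 = η ^ 2 * ε := by rw [mul_pow, sq_sqrt hε.le]
    rcases hd with ⟨hE, -⟩ | ⟨hE, hts⟩
    · nlinarith [mul_pos (pow_pos hη 2) hε]
    · nlinarith [pow_le_pow_left₀ ht hts 2]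

theorem filtering_lemma_general {ι : Type*} (S : Finset ι)
    (ε η A r : ℝ) (α β x xh βh αh : ι → ℝ)
    (hε : 0 < ε) (hη : 0 < η) (hr1 : 1 ≤ r) (hr2 : r < 2)
    (hα : ∀ P ∈ S, -η ≤ α P ∧ α P ≤ η)
    (hβ : ∀ P ∈ S, 0 ≤ β P ∧ β P ≤ 1)
    (hx : ∀ P ∈ S, x P = α P * β P)
    (hsum : ∑ P ∈ S, |α P| ^ r ≤ A ^ r)
    (hxh : ∀ P ∈ S, |xh P - x P| < η * ε)
    (hβh : ∀ P ∈ S, |βh P - β P| < ε)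
    (hαh : ∀ P ∈ S, αh P =
      if 2 * ε < βh P ∧ 2 * η * Real.sqrt ε < |xh P| / Real.sqrt (βh P)
      then xh P / βh P else 0) :
    (∑ P ∈ S, β P * |αh P - α P| ^ 2 ≤ 6 * A ^ r * η ^ (2 - r) * ε ^ (1 - r / 2)) ∧
    (∀ P ∈ S, β P * |αh P - α P| ^ 2 ≤ 9 * η ^ 2 * ε) := by
  have hpt : ∀ P ∈ S,
      β P * |αh P - α P| ^ 2 ≤ 3 * (η ^ (2 - r) * ε ^ (1 - r / 2)) * |α P| ^ r ∧
        β P * |αh P - α P| ^ 2 ≤ 9 * η ^ 2 * ε := by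
    intro P hP
    rw [show αh P = thresholdEstimate ε η (xh P) (βh P) from hαh P hP]
    exact thresholdEstimate_error_le hε hη (abs_le.mpr (hα P hP)) (hβ P hP).1 (hβ P hP).2
      (hx P hP ▸ hxh P hP) (hβh P hP) hr1 hr2.le
  refine ⟨?_, fun P hP => (hpt P hP).2⟩
  have hAr : 0 ≤ A ^ r := (sum_nonneg fun P _ => rpow_nonneg (abs_nonneg (α P)) r).trans hsum
  have hC : 0 ≤ η ^ (2 - r) * ε ^ (1 - r / 2) := by positivity
  calc ∑ P ∈ S, β P * |αh P - α P| ^ 2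
      ≤ ∑ P ∈ S, 3 * (η ^ (2 - r) * ε ^ (1 - r / 2)) * |α P| ^ r :=
        sum_le_sum fun P hP => (hpt P hP).1
    _ = 3 * (η ^ (2 - r) * ε ^ (1 - r / 2)) * ∑ P ∈ S, |α P| ^ r := (mul_sum _ _ _).symm
    _ ≤ 3 * (η ^ (2 - r) * ε ^ (1 - r / 2)) * A ^ r := by gcongr
    _ ≤ 6 * A ^ r * η ^ (2 - r) * ε ^ (1 - r / 2) := by nlinarith [mul_nonneg hC hAr]

/-- Filtering lemma: thresholding on both small weight factors `β_P` and small
influences `|x̂_P| / √β̂_P` yields total error `≤ 6 A^r η^{2-r} ε̃^{1-r/2}` and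
pointwise error `≤ 9 η² ε̃`. -/
theorem filtering_lemma {ι : Type*} (S : Finset ι)
    (ε η A r : ℝ) (α β x xh βh αh : ι → ℝ)
    (hε : 0 < ε) (hη : 0 < η) (hA : 0 < A) (hr1 : 1 ≤ r) (hr2 : r < 2)
    (hα : ∀ P ∈ S, -η ≤ α P ∧ α P ≤ η)
    (hβ : ∀ P ∈ S, 0 ≤ β P ∧ β P ≤ 1)
    (hx : ∀ P ∈ S, x P = α P * β P)
    (hsum : ∑ P ∈ S, |α P| ^ r ≤ A ^ r)
    (hxh : ∀ P ∈ S, |xh P - x P| < η * ε)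
    (hβh : ∀ P ∈ S, |βh P - β P| < ε)
    (hαh : ∀ P ∈ S, αh P =
      if 2 * ε < βh P ∧ 2 * η * Real.sqrt ε < |xh P| / Real.sqrt (βh P)
      then xh P / βh P else 0) :
    (∑ P ∈ S, β P * |αh P - α P| ^ 2 ≤ 6 * A ^ r * η ^ (2 - r) * ε ^ (1 - r / 2)) ∧
    (∀ P ∈ S, β P * |αh P - α P| ^ 2 ≤ 9 * η ^ 2 * ε) :=
  filtering_lemma_general S ε η A r α β x xh βh αh hε hη hr1 hr2 hα hβ hx hsum hxh hβh hαh
end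

section
/- Let π be the uniform distribution on {0,1}ⁿ and for i ∈ [n'] let πⁱ be the distribution assigning mass (1+(-1)^{x_i}ε)/2ⁿ to each string x, where 0 ≤ ε ≤ 1. Then 1 + χ²( E_{i∼[n']}[(πⁱ)^⊗N] ‖ π^⊗N ) = (1/n')(1+ε²)^N + (n'-1)/n', so the chi-squared divergence of the uniform mixture of N-fold products from the N-fold uniform distribution equals (1/n')((1+ε²)^N - 1). -/
open Finset

/-!
Expanding the square turns `1 + χ²` of the mixture into the average over pairs `(i, i')` of the
correlations `∑ X, πⁱ(X) πⁱ'(X) / π(X)` of the `N`-fold products. These tensorize into the `N`-th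
power of the one-copy correlation, which is `1 + ε²` if `i = i'` and `1` otherwise, because on the
Boolean cube the sign characters `(-1)^{x_k}` have mean zero and are pairwise orthogonal
(flipping the bit `x_k` is a measure-preserving involution negating `(-1)^{x_k}`).
-/

def boolSign (b : Bool) : ℝ := if b then -1 else 1

lemma boolSign_not (b : Bool) : boolSign (!b) = -boolSign b := by
  cases b <;> simp [boolSign]

lemma boolSign_mul_self (b : Bool) : boolSign b * boolSign b = 1 := by
  cases b <;> simp [boolSign]

section BooleanCube

variable {ι : Type*} [Fintype ι] [DecidableEq ι]

lemma sum_boolSign_mul_eq_zero (k : ι) {g : (ι → Bool) → ℝ}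
    (hg : ∀ x, g (Function.update x k (!x k)) = g x) :
    ∑ x : ι → Bool, boolSign (x k) * g x = 0 := by
  have hflip : Function.Involutive fun x : ι → Bool => Function.update x k (!x k) := by
    intro x
    ext j
    rcases eq_or_ne j k with rfl | hj
    · simp
    · simp [Function.update_of_ne hj]
  have hneg : ∑ x : ι → Bool, boolSign (x k) * g x = -∑ x : ι → Bool, boolSign (x k) * g x :=
    calc ∑ x : ι → Bool, boolSign (x k) * g x
        = ∑ x : ι → Bool, boolSign (Function.update x k (!x k) k) *
            g (Function.update x k (!x k)) :=
          (Equiv.sum_comp hflip.toPerm fun x => boolSign (x k) * g x).symm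
      _ = -∑ x : ι → Bool, boolSign (x k) * g x := by
          simp only [Function.update_self, boolSign_not, hg, neg_mul, sum_neg_distrib]
  linarith

lemma sum_boolSign_eq_zero (k : ι) : ∑ x : ι → Bool, boolSign (x k) = 0 := by
  simpa using sum_boolSign_mul_eq_zero k (g := fun _ => 1) fun _ => rfl

lemma sum_boolSign_mul_boolSign (k k' : ι) :
    ∑ x : ι → Bool, boolSign (x k) * boolSign (x k') =
      if k = k' then 2 ^ Fintype.card ι else 0 := by
  split_ifs with h
  · simp [h, boolSign_mul_self]
  · exact sum_boolSign_mul_eq_zero k fun x => by rw [Function.update_of_ne (Ne.symm h)]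

lemma sum_one_add_boolSign_mul_one_add_boolSign (k k' : ι) (ε : ℝ) :
    ∑ x : ι → Bool, (1 + boolSign (x k) * ε) * (1 + boolSign (x k') * ε) =
      2 ^ Fintype.card ι * if k = k' then 1 + ε ^ 2 else 1 := by
  have hexpand : ∀ x : ι → Bool, (1 + boolSign (x k) * ε) * (1 + boolSign (x k') * ε) =
      1 + ε * boolSign (x k) + ε * boolSign (x k') + ε ^ 2 * (boolSign (x k) * boolSign (x k')) :=
    fun x => by ring
  simp only [hexpand, sum_add_distrib, ← mul_sum, sum_boolSign_eq_zero, sum_boolSign_mul_boolSign]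
  split_ifs
  · simp
    ring
  · simp

noncomputable def biasedCube (k : ι) (ε : ℝ) (x : ι → Bool) : ℝ :=
  (1 + boolSign (x k) * ε) / 2 ^ Fintype.card ι

lemma sum_biasedCube_mul_biasedCube_div (k k' : ι) (ε : ℝ) :
    ∑ x, biasedCube k ε x * biasedCube k' ε x / (1 / 2 ^ Fintype.card ι) =
      if k = k' then 1 + ε ^ 2 else 1 := by
  have hterm : ∀ x, biasedCube k ε x * biasedCube k' ε x / (1 / 2 ^ Fintype.card ι) =
      (1 + boolSign (x k) * ε) * (1 + boolSign (x k') * ε) / 2 ^ Fintype.card ι := by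
    intro x
    simp only [biasedCube]
    field_simp
  rw [sum_congr rfl fun x _ => hterm x, ← sum_div, sum_one_add_boolSign_mul_one_add_boolSign]
  field_simp

end BooleanCube

section Field

variable {K : Type*} [Field K]

lemma sum_sq_mean_div {α ι : Type*} [Fintype α] [Fintype ι] (P : ι → α → K) (Q : α → K) (m : K) :
    ∑ x, ((1 / m) * ∑ i, P i x) ^ 2 / Q x =
      (1 / m) ^ 2 * ∑ i, ∑ i', ∑ x, P i x * P i' x / Q x := by
  have hexpand : ∀ x, ((1 / m) * ∑ i, P i x) ^ 2 / Q x =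
      (1 / m) ^ 2 * ∑ i, ∑ i', P i x * P i' x / Q x := by
    intro x
    rw [mul_pow, sq (∑ i, P i x), sum_mul_sum, mul_div_assoc, sum_div]
    simp only [sum_div]
  simp only [hexpand, ← mul_sum]
  rw [sum_comm]
  simp only [sum_comm (s := (univ : Finset α))]

lemma sum_prod_mul_prod_div_pow {α : Type*} [Fintype α] (N : ℕ) (p q : α → K) (c : K) :
    ∑ X : Fin N → α, (∏ j, p (X j)) * (∏ j, q (X j)) / c ^ N = (∑ x, p x * q x / c) ^ N := by
  rw [Fintype.sum_pow]
  refine sum_congr rfl fun X _ => ?_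
  rw [← prod_mul_distrib, ← Fin.prod_const, ← prod_div_distrib]

lemma sum_sum_ite_eq_else_one {ι : Type*} [Fintype ι] [DecidableEq ι] (a : K) :
    ∑ i : ι, ∑ j : ι, (if i = j then a else 1) = Fintype.card ι * (a - 1 + Fintype.card ι) := by
  have hsplit : ∀ i j : ι, (if i = j then a else 1) = (if i = j then a - 1 else 0) + 1 := by
    intro i j
    split_ifs <;> ring
  simp [hsplit, sum_add_distrib]
  ring

lemma one_div_sq_mul_mul_sub_one_add (m a : K) :
    (1 / m) ^ 2 * (m * (a - 1 + m)) = 1 / m * a + (m - 1) / m := by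
  rcases eq_or_ne m 0 with rfl | hm
  · simp
  · field_simp
    ring

end Field

theorem chi_squared_mixture_general (n n' N : ℕ) (hn : n' ≤ n) (ε : ℝ) :
    ∑ X : Fin N → (Fin n → Bool),
        ((1 / (n' : ℝ)) * ∑ i : Fin n',
            ∏ j : Fin N,
              (1 + (if X j (Fin.castLE hn i) then -1 else 1) * ε) / 2 ^ n) ^ 2
          / ((1 / 2 ^ n : ℝ)) ^ N
      = (1 / (n' : ℝ)) * (1 + ε ^ 2) ^ N + ((n' : ℝ) - 1) / n' := by
  have hbiased : ∀ (i : Fin n') (x : Fin n → Bool),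
      (1 + (if x (Fin.castLE hn i) then -1 else 1) * ε) / 2 ^ n =
        biasedCube (Fin.castLE hn i) ε x :=
    fun i x => by simp [biasedCube, boolSign]
  have hcorr : ∀ i i' : Fin n',
      ∑ x, biasedCube (Fin.castLE hn i) ε x * biasedCube (Fin.castLE hn i') ε x / (1 / 2 ^ n) =
        if i = i' then 1 + ε ^ 2 else 1 := fun i i' => by
    simpa [(Fin.castLE_injective hn).eq_iff] using
      sum_biasedCube_mul_biasedCube_div (Fin.castLE hn i) (Fin.castLE hn i') ε
  simp only [hbiased]
  rw [sum_sq_mean_div]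
  simp only [sum_prod_mul_prod_div_pow, hcorr, ite_pow, one_pow]
  rw [sum_sum_ite_eq_else_one, Fintype.card_fin, one_div_sq_mul_mul_sub_one_add]

/-- Chi-squared divergence computation: for the uniform distribution `π` on `{0,1}^n`
and the perturbed distributions `π^i` with mass `(1 + (-1)^{x_i} ε)/2^n`, the mixture
over `i ∈ [n']` of `N`-fold products satisfies
`1 + χ²(E_i[(π^i)^⊗N] ‖ π^⊗N) = (1/n')(1+ε²)^N + (n'-1)/n'`. -/
theorem chi_squared_mixture (n n' N : ℕ) (hn' : 1 ≤ n') (hn : n' ≤ n) (hN : 1 ≤ N)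
    (ε : ℝ) (hε0 : 0 ≤ ε) (hε1 : ε ≤ 1) :
    ∑ X : Fin N → (Fin n → Bool),
        ((1 / (n' : ℝ)) * ∑ i : Fin n',
            ∏ j : Fin N,
              (1 + (if X j (Fin.castLE hn i) then -1 else 1) * ε) / 2 ^ n) ^ 2
          / ((1 / 2 ^ n : ℝ)) ^ N
      = (1 / (n' : ℝ)) * (1 + ε ^ 2) ^ N + ((n' : ℝ) - 1) / n' :=
  chi_squared_mixture_general n n' N hn ε
end
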